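/- Let C and D be coalgebras over k and π: C → D a surjective coalgebra map (a coextension). Define Z := C ⊕ D with comultiplication Δ_Z(0,y) := Σ (0,y₍₁₎)⊗(0,y₍₂₎), Δ_Z(x,0) := Σ (x₍₁₎,0)⊗(x₍₂₎,0) + (0,π(x₍₁₎))⊗(x₍₂₎,0) + (x₍₁₎,0)⊗(0,π(x₍₂₎)), and counit ε_Z(x,y) := ε_D(y). Then (Z, Δ_Z, ε_Z) is a coassociative counital coalgebra; the inclusion i: D → Z, y ↦ (0,y), is a morphism of counital coalgebras; the projection p: Z → C, (x,y) ↦ x, is comultiplicative (Δ_C ∘ p = (p⊗p) ∘ Δ_Z); and 0 → D → Z → C → 0 is a short exact sequence of k-modules. -/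
import Mathlib


/-!
STATEMENT 12: Given a surjective coalgebra map (coextension) `π : C → D`, the k-module
`Z := C ⊕ D` with comultiplication
`Δ_Z(0,y) = (0,y₍₁₎)⊗(0,y₍₂₎)`,
`Δ_Z(x,0) = (x₍₁₎,0)⊗(x₍₂₎,0) + (0,π(x₍₁₎))⊗(x₍₂₎,0) + (x₍₁₎,0)⊗(0,π(x₍₂₎))`
and counit `ε_Z(x,y) = ε_D(y)` is a coassociative counital coalgebra; the inclusion
`i : D → Z` is a morphism of counital coalgebras; the projection `p : Z → C` is
comultiplicative; and `0 → D → Z → C → 0` is a short exact sequence of `k`-modules.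
-/

open TensorProduct Coalgebra

section
variable {k C D : Type*} [CommSemiring k]
  [AddCommMonoid C] [Module k C] [Coalgebra k C]
  [AddCommMonoid D] [Module k D] [Coalgebra k D]

/-- The comultiplication on the auxiliary coalgebra `Z = C ⊕ D` of a coextension `π`. -/
noncomputable def auxComul (π : C →ₗ[k] D) : (C × D) →ₗ[k] (C × D) ⊗[k] (C × D) :=
  ((TensorProduct.map (LinearMap.inl k C D) (LinearMap.inl k C D)
      + TensorProduct.map ((LinearMap.inr k C D) ∘ₗ π) (LinearMap.inl k C D)
      + TensorProduct.map (LinearMap.inl k C D) ((LinearMap.inr k C D) ∘ₗ π))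
    ∘ₗ (comul : C →ₗ[k] C ⊗[k] C) ∘ₗ (LinearMap.fst k C D))
  + ((TensorProduct.map (LinearMap.inr k C D) (LinearMap.inr k C D))
    ∘ₗ (comul : D →ₗ[k] D ⊗[k] D) ∘ₗ (LinearMap.snd k C D))

/-- The counit on the auxiliary coalgebra `Z = C ⊕ D`: `ε_Z(x,y) = ε_D(y)`. -/
noncomputable def auxCounit : (C × D) →ₗ[k] k :=
  (counit : D →ₗ[k] k) ∘ₗ (LinearMap.snd k C D)

end

section Stmt12Helpers
open LinearMap
variable {R : Type*} [CommSemiring R] {M N P Q S T : Type*}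
  [AddCommMonoid M] [AddCommMonoid N] [AddCommMonoid P] [AddCommMonoid Q]
  [AddCommMonoid S] [AddCommMonoid T]
  [Module R M] [Module R N] [Module R P] [Module R Q] [Module R S] [Module R T]

lemma stmt12_rTensor_comp_map' (f' : P →ₗ[R] S) (f : M →ₗ[R] P) (g : N →ₗ[R] Q) (h : T →ₗ[R] M ⊗[R] N) :
    f'.rTensor Q ∘ₗ (map f g ∘ₗ h) = map (f' ∘ₗ f) g ∘ₗ h := by
  rw [← comp_assoc, rTensor_comp_map]

lemma stmt12_lTensor_comp_map' (g' : Q →ₗ[R] S) (f : M →ₗ[R] P) (g : N →ₗ[R] Q) (h : T →ₗ[R] M ⊗[R] N) :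
    g'.lTensor P ∘ₗ (map f g ∘ₗ h) = map f (g' ∘ₗ g) ∘ₗ h := by
  rw [← comp_assoc, lTensor_comp_map]

lemma stmt12_map_comp_left (f : M →ₗ[R] P) (g : N →ₗ[R] Q) (d : S →ₗ[R] M) (h : T →ₗ[R] S ⊗[R] N) :
    map (f ∘ₗ d) g ∘ₗ h = map f g ∘ₗ (d.rTensor N ∘ₗ h) := by
  rw [← comp_assoc, map_comp_rTensor]

lemma stmt12_map_comp_right (f : M →ₗ[R] P) (g : N →ₗ[R] Q) (d : S →ₗ[R] N) (h : T →ₗ[R] M ⊗[R] S) :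
    map f (g ∘ₗ d) ∘ₗ h = map f g ∘ₗ (d.lTensor M ∘ₗ h) := by
  rw [← comp_assoc, map_comp_lTensor]

lemma stmt12_map_comp' (f : M →ₗ[R] P) (g : N →ₗ[R] Q) (a : S →ₗ[R] M) (b : T →ₗ[R] N)
    {U : Type*} [AddCommMonoid U] [Module R U] (h : U →ₗ[R] S ⊗[R] T) :
    map f g ∘ₗ (map a b ∘ₗ h) = map (f ∘ₗ a) (g ∘ₗ b) ∘ₗ h := by
  rw [← comp_assoc, ← TensorProduct.map_comp]

end Stmt12Helpers

theorem stmt12_auxiliary_coalgebra_of_a_coextension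
    (k : Type*) [Field k] [CharZero k]
    (C D : Type*) [AddCommGroup C] [Module k C] [Coalgebra k C]
    [AddCommGroup D] [Module k D] [Coalgebra k D]
    -- `π` is a coextension: a surjective morphism of counital coalgebras
    (π : C →ₗ[k] D) (hπsurj : Function.Surjective π)
    (hπcomul : (comul : D →ₗ[k] D ⊗[k] D) ∘ₗ π = (TensorProduct.map π π) ∘ₗ comul)
    (hπcounit : (counit : D →ₗ[k] k) ∘ₗ π = counit) :
    -- `Δ_Z` is coassociative
    ((TensorProduct.assoc k (C × D) (C × D) (C × D)).toLinearMap
        ∘ₗ (auxComul π).rTensor (C × D) ∘ₗ auxComul π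
      = (auxComul π).lTensor (C × D) ∘ₗ auxComul π) ∧
    -- `ε_Z` is a counit for `Δ_Z`
    ((TensorProduct.lid k (C × D)).toLinearMap
        ∘ₗ (auxCounit (k := k) (C := C) (D := D)).rTensor (C × D) ∘ₗ auxComul π
      = LinearMap.id) ∧
    ((TensorProduct.rid k (C × D)).toLinearMap
        ∘ₗ (auxCounit (k := k) (C := C) (D := D)).lTensor (C × D) ∘ₗ auxComul π
      = LinearMap.id) ∧
    -- `i : D → Z` is a morphism of counital coalgebras
    (auxComul π ∘ₗ LinearMap.inr k C D
      = (TensorProduct.map (LinearMap.inr k C D) (LinearMap.inr k C D)) ∘ₗ comul) ∧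
    ((auxCounit (k := k) (C := C) (D := D)) ∘ₗ LinearMap.inr k C D = counit) ∧
    -- `p : Z → C` is comultiplicative
    ((comul : C →ₗ[k] C ⊗[k] C) ∘ₗ LinearMap.fst k C D
      = (TensorProduct.map (LinearMap.fst k C D) (LinearMap.fst k C D)) ∘ₗ auxComul π) ∧
    -- `0 → D → Z → C → 0` is a short exact sequence of `k`-modules
    (Function.Injective (LinearMap.inr k C D) ∧
      Function.Surjective (LinearMap.fst k C D) ∧
      LinearMap.range (LinearMap.inr k C D) = LinearMap.ker (LinearMap.fst k C D)) := by
  set i := LinearMap.inl k C D with hidef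
  set j := LinearMap.inr k C D with hjdef
  set q : C →ₗ[k] C × D := LinearMap.inr k C D ∘ₗ π with hqdef
  have hΔi : auxComul π ∘ₗ i
      = (TensorProduct.map i i + TensorProduct.map q i + TensorProduct.map i q) ∘ₗ comul := by
    unfold auxComul
    rw [LinearMap.add_comp, LinearMap.comp_assoc, LinearMap.comp_assoc,
      LinearMap.comp_assoc, LinearMap.comp_assoc, LinearMap.fst_comp_inl,
      LinearMap.snd_comp_inl, LinearMap.comp_zero, LinearMap.comp_zero, LinearMap.comp_id,
      add_zero]
  have hΔj : auxComul π ∘ₗ j = TensorProduct.map j j ∘ₗ comul := by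
    unfold auxComul
    rw [LinearMap.add_comp, LinearMap.comp_assoc, LinearMap.comp_assoc,
      LinearMap.comp_assoc, LinearMap.comp_assoc, LinearMap.fst_comp_inr,
      LinearMap.snd_comp_inr, LinearMap.comp_zero, LinearMap.comp_zero, LinearMap.comp_id,
      zero_add]
  have hΔq : auxComul π ∘ₗ q = TensorProduct.map q q ∘ₗ comul := by
    rw [hqdef, ← LinearMap.comp_assoc, hΔj, LinearMap.comp_assoc, hπcomul,
      ← LinearMap.comp_assoc, ← TensorProduct.map_comp]
  have hei : auxCounit (k := k) (C := C) (D := D) ∘ₗ i = 0 := by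
    unfold auxCounit
    rw [LinearMap.comp_assoc, hidef, LinearMap.snd_comp_inl, LinearMap.comp_zero]
  have hej : auxCounit (k := k) (C := C) (D := D) ∘ₗ j = counit := by
    unfold auxCounit
    rw [LinearMap.comp_assoc, hjdef, LinearMap.snd_comp_inr, LinearMap.comp_id]
  have heq : auxCounit (k := k) (C := C) (D := D) ∘ₗ q = counit := by
    rw [hqdef, ← LinearMap.comp_assoc, hej, hπcounit]
  have key : ∀ a b c : C →ₗ[k] C × D,
      (TensorProduct.assoc k (C × D) (C × D) (C × D)).toLinearMap ∘ₗ
        (TensorProduct.map (TensorProduct.map a b) c ∘ₗ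
          ((comul (R := k) (A := C)).rTensor C ∘ₗ comul)) =
      TensorProduct.map a (TensorProduct.map b c) ∘ₗ
        ((comul (R := k) (A := C)).lTensor C ∘ₗ comul) := by
    intro a b c
    rw [← LinearMap.comp_assoc, ← TensorProduct.map_map_comp_assoc_eq,
      LinearMap.comp_assoc, Coalgebra.coassoc]
  have keyD : ∀ a b c : D →ₗ[k] C × D,
      (TensorProduct.assoc k (C × D) (C × D) (C × D)).toLinearMap ∘ₗ
        (TensorProduct.map (TensorProduct.map a b) c ∘ₗ
          ((comul (R := k) (A := D)).rTensor D ∘ₗ comul)) =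
      TensorProduct.map a (TensorProduct.map b c) ∘ₗ
        ((comul (R := k) (A := D)).lTensor D ∘ₗ comul) := by
    intro a b c
    rw [← LinearMap.comp_assoc, ← TensorProduct.map_map_comp_assoc_eq,
      LinearMap.comp_assoc, Coalgebra.coassoc]
  refine ⟨?_, ?_, ?_, hΔj, hej, ?_, LinearMap.inr_injective, LinearMap.fst_surjective,
    LinearMap.range_inr k C D⟩
  · -- coassociativity
    apply LinearMap.prod_ext
    · show _ ∘ₗ i = _ ∘ₗ i
      simp only [LinearMap.comp_assoc, hΔi]
      simp only [LinearMap.comp_add, LinearMap.add_comp,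
        stmt12_rTensor_comp_map', stmt12_lTensor_comp_map', hΔi, hΔq,
        TensorProduct.map_add_left, TensorProduct.map_add_right,
        stmt12_map_comp_left, stmt12_map_comp_right, key]
      abel
    · show _ ∘ₗ j = _ ∘ₗ j
      simp only [LinearMap.comp_assoc, hΔj]
      simp only [LinearMap.comp_add, LinearMap.add_comp,
        stmt12_rTensor_comp_map', stmt12_lTensor_comp_map', hΔj,
        TensorProduct.map_add_left, TensorProduct.map_add_right,
        stmt12_map_comp_left, stmt12_map_comp_right, keyD]
  · -- left counit
    apply LinearMap.prod_ext
    · show _ ∘ₗ i = _ ∘ₗ i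
      simp only [LinearMap.comp_assoc, hΔi]
      simp only [LinearMap.comp_add, LinearMap.add_comp,
        stmt12_rTensor_comp_map', hei, heq, TensorProduct.map_zero_left,
        LinearMap.zero_comp, zero_add, add_zero,
        stmt12_map_comp_left]
      refine LinearMap.ext fun x => ?_
      rw [← LinearMap.lTensor_comp_rTensor]
      simp only [LinearMap.comp_apply, Coalgebra.rTensor_counit_comul,
        LinearMap.lTensor_tmul, LinearEquiv.coe_coe, TensorProduct.lid_tmul, one_smul, LinearMap.id_coe, id_eq]
    · show _ ∘ₗ j = _ ∘ₗ j
      simp only [LinearMap.comp_assoc, hΔj]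
      simp only [stmt12_rTensor_comp_map', hej]
      refine LinearMap.ext fun y => ?_
      rw [← LinearMap.lTensor_comp_rTensor]
      simp only [LinearMap.comp_apply, Coalgebra.rTensor_counit_comul,
        LinearMap.lTensor_tmul, LinearEquiv.coe_coe, TensorProduct.lid_tmul, one_smul, LinearMap.id_coe, id_eq]
  · -- right counit
    apply LinearMap.prod_ext
    · show _ ∘ₗ i = _ ∘ₗ i
      simp only [LinearMap.comp_assoc, hΔi]
      simp only [LinearMap.comp_add, LinearMap.add_comp,
        stmt12_lTensor_comp_map', hei, heq, TensorProduct.map_zero_right,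
        LinearMap.zero_comp, zero_add, add_zero]
      refine LinearMap.ext fun x => ?_
      rw [← LinearMap.rTensor_comp_lTensor]
      simp only [LinearMap.comp_apply, Coalgebra.lTensor_counit_comul,
        LinearMap.rTensor_tmul, LinearEquiv.coe_coe, TensorProduct.rid_tmul, one_smul, LinearMap.id_coe, id_eq]
    · show _ ∘ₗ j = _ ∘ₗ j
      simp only [LinearMap.comp_assoc, hΔj]
      simp only [stmt12_lTensor_comp_map', hej]
      refine LinearMap.ext fun y => ?_
      rw [← LinearMap.rTensor_comp_lTensor]
      simp only [LinearMap.comp_apply, Coalgebra.lTensor_counit_comul,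
        LinearMap.rTensor_tmul, LinearEquiv.coe_coe, TensorProduct.rid_tmul, one_smul, LinearMap.id_coe, id_eq]
  · -- p is comultiplicative
    apply LinearMap.prod_ext
    · show _ ∘ₗ i = _ ∘ₗ i
      simp only [LinearMap.comp_assoc, hΔi]
      have h1 : LinearMap.fst k C D ∘ₗ i = LinearMap.id := LinearMap.fst_comp_inl k C D
      have h2 : LinearMap.fst k C D ∘ₗ q = 0 := by
        rw [hqdef, ← LinearMap.comp_assoc, LinearMap.fst_comp_inr, LinearMap.zero_comp]
      simp only [LinearMap.comp_add, LinearMap.add_comp,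
        stmt12_rTensor_comp_map', stmt12_lTensor_comp_map',
        stmt12_map_comp', h1, h2, TensorProduct.map_zero_left,
        TensorProduct.map_zero_right, LinearMap.zero_comp, zero_add, add_zero,
        TensorProduct.map_id, LinearMap.id_comp, LinearMap.comp_id]
    · show _ ∘ₗ j = _ ∘ₗ j
      simp only [LinearMap.comp_assoc, hΔj]
      have h3 : LinearMap.fst k C D ∘ₗ j = 0 := LinearMap.fst_comp_inr k C D
      rw [h3, LinearMap.comp_zero, stmt12_map_comp', h3, TensorProduct.map_zero_left,
        LinearMap.zero_comp]
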